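/- Let Ω be a measurable space, μ a probability measure on Ω, 𝒞 a concept class on Ω, ε > 0 and δ ∈ (0,1). Suppose C₁,…,C_M ∈ 𝒞 are pairwise 2ε-separated in L¹(μ): μ(C_i Δ C_j) > 2ε whenever i ≠ j. Then every learning rule L with sample size m that is PAC for 𝒞 under μ to accuracy ε with confidence 1 − δ satisfies 2^m ≥ (1 − δ)·M; in particular m ≥ log₂((1 − δ)·M). -/
import Mathlib


open MeasureTheory Filter

/-- The `n`-fold product (i.i.d.) measure on `Fin n → Ω`. -/
noncomputable def prodMeas {Ω : Type*} [MeasurableSpace Ω] (μ : Measure Ω) (n : ℕ) :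
    Measure (Fin n → Ω) := Measure.pi fun _ => μ

/-- The sample `x` labeled by the concept `C`. -/
noncomputable def labeled {Ω : Type*} (C : Set Ω) {m : ℕ} (x : Fin m → Ω) :
    Fin m → Ω × Bool := fun i => (x i, @decide (x i ∈ C) (Classical.propDecidable _))

/-- `L` is PAC for `𝒞` under `μ` to accuracy `ε` with confidence `1 - δ`. -/
def IsPAC {Ω : Type*} [MeasurableSpace Ω] (μ : Measure Ω) (𝒞 : Set (Set Ω)) (m : ℕ)
    (L : (Fin m → Ω × Bool) → Set Ω) (ε δ : ℝ) : Prop :=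
  ∀ C ∈ 𝒞, prodMeas μ m
    {x | ε < (μ (symmDiff (L (labeled C x)) C)).toReal} ≤ ENNReal.ofReal δ

/-- packing lower bound on sample complexity: if `C 0, …, C (M-1) ∈ 𝒞`
are pairwise `2ε`-separated in `L¹(μ)`, then every learning rule with sample size `m` that
is PAC for `𝒞` under `μ` to accuracy `ε` with confidence `1 - δ` satisfies
`2^m ≥ (1 - δ) M`, in particular `m ≥ log₂ ((1 - δ) M)`. -/
theorem stmt2 {Ω : Type*} [MeasurableSpace Ω] (μ : Measure Ω) [IsProbabilityMeasure μ]
    (𝒞 : Set (Set Ω)) (h𝒞 : ∀ C ∈ 𝒞, MeasurableSet C)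
    (ε δ : ℝ) (hε : 0 < ε) (hδ0 : 0 < δ) (hδ1 : δ < 1)
    (M : ℕ) (C : Fin M → Set Ω) (hmem : ∀ i, C i ∈ 𝒞)
    (hsep : ∀ i j : Fin M, i ≠ j → ENNReal.ofReal (2 * ε) < μ (symmDiff (C i) (C j)))
    (m : ℕ) (L : (Fin m → Ω × Bool) → Set Ω) (hLmeas : ∀ s, MeasurableSet (L s))
    (hPAC : IsPAC μ 𝒞 m L ε δ) :
    (1 - δ) * M ≤ 2 ^ m ∧ Real.logb 2 ((1 - δ) * M) ≤ m := by
  classical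

  set ν := prodMeas μ m with hν
  haveI : IsProbabilityMeasure ν := by
    rw [hν, prodMeas]; infer_instance
  -- the good events
  set Bad : Fin M → Set (Fin m → Ω) :=
    fun i => {x | ε < (μ (symmDiff (L (labeled (C i) x)) (C i))).toReal} with hBad
  set K : Fin M → Set (Fin m → Ω) := fun i => (toMeasurable ν (Bad i))ᶜ with hK
  have hKmeas : ∀ i, MeasurableSet (K i) :=
    fun i => (measurableSet_toMeasurable _ _).compl
  have hKlb : ∀ i, ENNReal.ofReal (1 - δ) ≤ ν (K i) := by
    intro i
    have h1 : ν (toMeasurable ν (Bad i)) ≤ ENNReal.ofReal δ := by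
      rw [measure_toMeasurable]
      exact hPAC (C i) (hmem i)
    have h2 : ν (K i) = 1 - ν (toMeasurable ν (Bad i)) := by
      rw [hK, measure_compl (measurableSet_toMeasurable _ _) (measure_ne_top _ _),
        measure_univ]
    rw [h2]
    calc ENNReal.ofReal (1 - δ) = 1 - ENNReal.ofReal δ := by
          rw [ENNReal.ofReal_sub _ hδ0.le, ENNReal.ofReal_one]
      _ ≤ 1 - ν (toMeasurable ν (Bad i)) := tsub_le_tsub_left h1 1
  -- multiplicity bound: each sample lies in at most 2^m of the K i
  have hmult : ∀ x : Fin m → Ω,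
      (Finset.univ.filter (fun i => x ∈ K i)).card ≤ 2 ^ m := by
    intro x
    have hinj : Set.InjOn (fun i => labeled (C i) x)
        ↑(Finset.univ.filter (fun i => x ∈ K i)) := by
      intro i hi j hj hij
      by_contra hne
      have hxi : x ∉ Bad i := fun h => (Finset.mem_filter.1 hi).2
        (subset_toMeasurable _ _ h)
      have hxj : x ∉ Bad j := fun h => (Finset.mem_filter.1 hj).2
        (subset_toMeasurable _ _ h)
      simp only [hBad, Set.mem_setOf_eq, not_lt] at hxi hxj
      have hμi : μ (symmDiff (L (labeled (C i) x)) (C i)) ≤ ENNReal.ofReal ε :=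
        (ENNReal.le_ofReal_iff_toReal_le (measure_ne_top _ _) hε.le).2 hxi
      have hμj : μ (symmDiff (L (labeled (C j) x)) (C j)) ≤ ENNReal.ofReal ε :=
        (ENNReal.le_ofReal_iff_toReal_le (measure_ne_top _ _) hε.le).2 hxj
      have heq : L (labeled (C i) x) = L (labeled (C j) x) := congrArg L hij
      have : μ (symmDiff (C i) (C j)) ≤ ENNReal.ofReal (2 * ε) := by
        calc μ (symmDiff (C i) (C j))
            ≤ μ (symmDiff (C i) (L (labeled (C i) x)))
              + μ (symmDiff (L (labeled (C i) x)) (C j)) :=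
              measure_symmDiff_le _ _ _
          _ ≤ ENNReal.ofReal ε + ENNReal.ofReal ε := by
              refine add_le_add ?_ ?_
              · rwa [symmDiff_comm]
              · rwa [heq]
          _ = ENNReal.ofReal (2 * ε) := by
              rw [← ENNReal.ofReal_add hε.le hε.le]; ring_nf
      exact absurd this (not_le.2 (hsep i j hne))
    have hcard := Set.InjOn.encard_image hinj
    have : ∀ i ∈ Finset.univ.filter (fun i => x ∈ K i),
        (fun k => (labeled (C i) x k).2) ∈ (Finset.univ : Finset (Fin m → Bool)) :=
      fun _ _ => Finset.mem_univ _
    have hinj2 : ∀ i ∈ Finset.univ.filter (fun i => x ∈ K i),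
        ∀ j ∈ Finset.univ.filter (fun i => x ∈ K i),
        (fun k => (labeled (C i) x k).2) = (fun k => (labeled (C j) x k).2) → i = j := by
      intro i hi j hj h
      refine hinj hi hj ?_
      funext k
      have h2 := congrFun h k
      exact Prod.ext rfl h2
    calc (Finset.univ.filter (fun i => x ∈ K i)).card
        ≤ (Finset.univ : Finset (Fin m → Bool)).card :=
          Finset.card_le_card_of_injOn _ this hinj2
      _ = 2 ^ m := by simp
  -- integrate
  have hsum : (M : ENNReal) * ENNReal.ofReal (1 - δ) ≤ 2 ^ m := by
    calc (M : ENNReal) * ENNReal.ofReal (1 - δ)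
        = ∑ i : Fin M, ENNReal.ofReal (1 - δ) := by
          rw [Finset.sum_const, Finset.card_univ, Fintype.card_fin, nsmul_eq_mul]
      _ ≤ ∑ i : Fin M, ν (K i) := Finset.sum_le_sum fun i _ => hKlb i
      _ = ∑ i : Fin M, ∫⁻ x, (K i).indicator 1 x ∂ν := by
          refine Finset.sum_congr rfl fun i _ => ?_
          rw [lintegral_indicator_one (hKmeas i)]
      _ = ∫⁻ x, ∑ i : Fin M, (K i).indicator 1 x ∂ν := by
          rw [lintegral_finset_sum]
          exact fun i _ => (measurable_one.indicator (hKmeas i))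
      _ ≤ ∫⁻ _, (2 ^ m : ENNReal) ∂ν := by
          refine lintegral_mono fun x => ?_
          have : ∑ i : Fin M, (K i).indicator (1 : (Fin m → Ω) → ENNReal) x
              = ((Finset.univ.filter (fun i => x ∈ K i)).card : ENNReal) := by
            rw [Finset.card_filter]
            push_cast
            refine Finset.sum_congr rfl fun i _ => ?_
            by_cases hx : x ∈ K i <;> simp [Set.indicator, hx]
          rw [this]
          exact_mod_cast Nat.cast_le.2 (hmult x)
      _ = 2 ^ m := by simp
  have hreal : (1 - δ) * M ≤ 2 ^ m := by
    have := hsum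
    rw [show ((2:ENNReal) ^ m) = ENNReal.ofReal (2 ^ m) by
        simp [ENNReal.ofReal_pow], ← ENNReal.ofReal_natCast M,
      ← ENNReal.ofReal_mul (by positivity)] at this
    have h := (ENNReal.ofReal_le_ofReal_iff (by positivity)).1 this
    linarith [h]
  refine ⟨hreal, ?_⟩
  rcases Nat.eq_zero_or_pos M with hM | hM
  · subst hM; simp [Real.logb]
  · have hpos : 0 < (1 - δ) * M := by
      have : (0:ℝ) < M := by exact_mod_cast hM
      nlinarith
    rw [Real.logb_le_iff_le_rpow (by norm_num) hpos]
    rw [Real.rpow_natCast]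
    exact hreal
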